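/- Let G be a fixed (deterministic) real n×n matrix and H a fixed real n×r matrix. Then E[tr(Hᵗ YᵗY G Gᵗ YᵗY H)] = q · tr(Σ G Gᵗ) · tr(Σ H Hᵗ) + q(q + 1) · tr(Σ G Gᵗ Σ H Hᵗ). -/

import Mathlib

open MeasureTheory ProbabilityTheory Matrix Filter

instance matrixMeasurableSpace {m n : ℕ} : MeasurableSpace (Matrix (Fin m) (Fin n) ℝ) :=
  inferInstanceAs (MeasurableSpace (Fin m → Fin n → ℝ))

/-- Law of a `p × n` random matrix with i.i.d. standard Gaussian entries. -/
noncomputable def stdGaussianMatrix (p n : ℕ) : Measure (Matrix (Fin p) (Fin n) ℝ) :=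
  Measure.pi (fun _ : Fin p => Measure.pi (fun _ : Fin n => gaussianReal 0 1))

/-- Law of a `p × n` random matrix whose rows are i.i.d. mean-zero Gaussian vectors
with covariance `S` (realized as standard Gaussian matrix times the square root of `S`). -/
noncomputable def gaussianRowsMatrix (p n : ℕ) (S : Matrix (Fin n) (Fin n) ℝ)
    (hS : S.PosDef) : Measure (Matrix (Fin p) (Fin n) ℝ) :=
  (stdGaussianMatrix p n).map (fun Z => Z * ((hS.posSemidef.1.eigenvectorUnitary : Matrix (Fin n) (Fin n) ℝ) *
    diagonal (Real.sqrt ∘ hS.posSemidef.1.eigenvalues) *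
    (star hS.posSemidef.1.eigenvectorUnitary : Matrix (Fin n) (Fin n) ℝ)))

/-!
Write `Y = Z R` with `R = √S` and `Z` a standard Gaussian matrix; then the integrand is
`tr (ZᵀZ M ZᵀZ N)` with `M = R G Gᵀ Rᵀ` and `N = R H Hᵀ Rᵀ`. The entries of `Z` are independent
standard Gaussians, so Isserlis' theorem gives
`E[(ZᵀZ)_ab (ZᵀZ)_cd] = q² δ_ab δ_cd + q (δ_ac δ_bd + δ_ad δ_bc)`, and contracting with `M` and `N`
yields `q² tr (M N) + q tr (Mᵀ N) + q tr M tr N`. The Gaussian moments `E x² = 1`, `E x⁴ = 3`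
behind Isserlis' theorem are read off from the derivatives of the moment generating function
`exp (t² / 2)` at `0`.
-/

instance matrixBorelSpace {m n : ℕ} : BorelSpace (Matrix (Fin m) (Fin n) ℝ) :=
  inferInstanceAs (BorelSpace (Fin m → Fin n → ℝ))

section GaussianMoments

open Polynomial

lemma deriv_eval_mul_exp_sq_div_two (p : ℝ[X]) :
    deriv (fun t => p.eval t * Real.exp (t ^ 2 / 2)) =
      fun t => (derivative p + X * p).eval t * Real.exp (t ^ 2 / 2) := by
  funext t
  refine ((p.hasDerivAt t).fun_mul ((hasDerivAt_pow 2 t).div_const 2).exp).deriv.trans ?_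
  simp only [eval_add, eval_mul, eval_X]
  norm_num
  ring

/-- The `k`-th derivative of `t ↦ exp (t ^ 2 / 2)`, the moment generating function of
`gaussianReal 0 1`, is `gaussianMGFDerivPoly k` times that function. -/
noncomputable def gaussianMGFDerivPoly : ℕ → ℝ[X]
  | 0 => 1
  | k + 1 => derivative (gaussianMGFDerivPoly k) + X * gaussianMGFDerivPoly k

lemma iteratedDeriv_mgf_gaussianReal (k : ℕ) :
    iteratedDeriv k (mgf (fun x => x) (gaussianReal 0 1)) =
      fun t => (gaussianMGFDerivPoly k).eval t * Real.exp (t ^ 2 / 2) := by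
  induction k with
  | zero => simp [mgf_fun_id_gaussianReal, gaussianMGFDerivPoly]
  | succ k ih => rw [iteratedDeriv_succ, ih, deriv_eval_mul_exp_sq_div_two]; rfl

lemma integral_pow_gaussianReal (k : ℕ) :
    ∫ x, x ^ k ∂gaussianReal 0 1 = (gaussianMGFDerivPoly k).eval 0 := by
  have h := iteratedDeriv_mgf_zero (X := fun x : ℝ => x) (μ := gaussianReal 0 1) (by simp) k
  rw [iteratedDeriv_mgf_gaussianReal] at h
  simpa using h.symm

lemma integrable_pow_gaussianReal (k : ℕ) : Integrable (fun x => x ^ k) (gaussianReal 0 1) :=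
  integrable_pow_of_mem_interior_integrableExpSet (X := fun x => x) (by simp) k

end GaussianMoments

lemma Multiset.prod_map_eq_prod_pow_count {ι M : Type*} [Fintype ι] [DecidableEq ι]
    [CommMonoid M] (s : Multiset ι) (f : ι → M) : (s.map f).prod = ∏ t, f t ^ s.count t := by
  rw [Finset.prod_multiset_map_count]
  exact Finset.prod_subset (Finset.subset_univ _) fun t _ ht => by
    rw [Multiset.count_eq_zero.2 (by simpa using ht), pow_zero]

section StdGaussianVector

variable {ι : Type*} [Fintype ι] [DecidableEq ι]

lemma integrable_multiset_prod_pi_gaussianReal (s : Multiset ι) :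
    Integrable (fun z : ι → ℝ => (s.map z).prod) (Measure.pi fun _ => gaussianReal 0 1) := by
  simp_rw [Multiset.prod_map_eq_prod_pow_count]
  exact Integrable.fintype_prod fun t => integrable_pow_gaussianReal (s.count t)

lemma integral_multiset_prod_pi_gaussianReal (s : Multiset ι) :
    ∫ z : ι → ℝ, (s.map z).prod ∂(Measure.pi fun _ => gaussianReal 0 1) =
      ∏ t, (gaussianMGFDerivPoly (s.count t)).eval 0 := by
  simp_rw [Multiset.prod_map_eq_prod_pow_count,
    integral_fintype_prod_eq_prod (fun t x => x ^ s.count t), integral_pow_gaussianReal]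

lemma integrable_mul_mul_mul_pi_gaussianReal (a b c d : ι) :
    Integrable (fun z : ι → ℝ => z a * z b * z c * z d)
      (Measure.pi fun _ => gaussianReal 0 1) := by
  simpa [mul_assoc] using integrable_multiset_prod_pi_gaussianReal {a, b, c, d}

lemma integral_mul_mul_mul_pi_gaussianReal (a b c d : ι) :
    ∫ z : ι → ℝ, z a * z b * z c * z d ∂(Measure.pi fun _ => gaussianReal 0 1) =
      (if a = b then 1 else 0) * (if c = d then 1 else 0)
        + (if a = c then 1 else 0) * (if b = d then 1 else 0)
        + (if a = d then 1 else 0) * (if b = c then 1 else 0) := by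
  have h := integral_multiset_prod_pi_gaussianReal {a, b, c, d}
  simp only [Multiset.insert_eq_cons, Multiset.map_cons, Multiset.prod_cons,
    Multiset.map_singleton, Multiset.prod_singleton, ← mul_assoc] at h
  -- only the coordinates `a, b, c, d` contribute; then split on their equality pattern
  rw [h, ← Finset.prod_subset (Finset.subset_univ (Multiset.toFinset {a, b, c, d}))
    fun t _ ht => by
      rw [Multiset.count_eq_zero.2 (by simpa using ht)]; simp [gaussianMGFDerivPoly]]
  by_cases hab : a = b <;> by_cases hac : a = c <;> by_cases had : a = d <;>
    by_cases hbc : b = c <;> by_cases hbd : b = d <;> by_cases hcd : c = d <;>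
    simp_all [Multiset.count_cons, Finset.prod_insert, eq_comm, gaussianMGFDerivPoly]

end StdGaussianVector

lemma trace_mul_mul_mul_mul_eq_sum {ι : Type*} [Fintype ι] (A M B N : Matrix ι ι ℝ) :
    (A * M * B * N).trace = ∑ a, ∑ b, ∑ c, ∑ d, A a b * B c d * (M b c * N d a) := by
  rw [Matrix.mul_assoc, Matrix.mul_assoc]
  simp only [trace, diag, mul_apply, Finset.mul_sum]
  exact Finset.sum_congr rfl fun a _ => Finset.sum_congr rfl fun b _ => Finset.sum_congr rfl
    fun c _ => Finset.sum_congr rfl fun d _ => by ring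

lemma trace_mul_mul_transpose {ι κ : Type*} [Fintype ι] [Fintype κ] (R : Matrix ι κ ℝ)
    (A : Matrix κ κ ℝ) : (R * A * Rᵀ).trace = (Rᵀ * R * A).trace := by
  rw [trace_mul_comm, Matrix.mul_assoc]

lemma measurePreserving_curry_stdGaussianMatrix (q n : ℕ) :
    MeasurePreserving (fun w : Fin q × Fin n → ℝ => Matrix.of (Function.curry w))
      (Measure.pi fun _ => gaussianReal 0 1) (stdGaussianMatrix q n) := by
  refine ⟨(MeasurableEquiv.curry _ _ ℝ).measurable, ?_⟩
  simp_rw [stdGaussianMatrix, ← Measure.infinitePi_eq_pi]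
  exact Measure.infinitePi_map_curry (fun _ _ => gaussianReal 0 1)

section StdGaussianMatrix

variable {q n : ℕ}

lemma gram_apply_mul_gram_apply (Z : Matrix (Fin q) (Fin n) ℝ) (a b c d : Fin n) :
    (Zᵀ * Z) a b * (Zᵀ * Z) c d = ∑ i, ∑ j, Z i a * Z i b * Z j c * Z j d := by
  simp only [mul_apply, transpose_apply, Finset.sum_mul_sum, mul_assoc]

lemma integrable_gram_apply_mul_gram_apply (a b c d : Fin n) :
    Integrable (fun Z : Matrix (Fin q) (Fin n) ℝ => (Zᵀ * Z) a b * (Zᵀ * Z) c d)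
      (stdGaussianMatrix q n) := by
  rw [← (measurePreserving_curry_stdGaussianMatrix q n).integrable_comp_emb
    (MeasurableEquiv.curry _ _ ℝ).measurableEmbedding]
  simp only [Function.comp_def, gram_apply_mul_gram_apply, of_apply, Function.curry_apply]
  exact integrable_finsetSum _ fun i _ => integrable_finsetSum _ fun j _ =>
    integrable_mul_mul_mul_pi_gaussianReal (i, a) (i, b) (j, c) (j, d)

lemma integral_gram_apply_mul_gram_apply (a b c d : Fin n) :
    ∫ Z, (Zᵀ * Z) a b * (Zᵀ * Z) c d ∂(stdGaussianMatrix q n) =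
      (q : ℝ) ^ 2 * ((if a = b then 1 else 0) * (if c = d then 1 else 0))
        + q * ((if a = c then 1 else 0) * (if b = d then 1 else 0)
          + (if a = d then 1 else 0) * (if b = c then 1 else 0)) := by
  rw [← (measurePreserving_curry_stdGaussianMatrix q n).integral_comp
    (MeasurableEquiv.curry _ _ ℝ).measurableEmbedding]
  simp only [gram_apply_mul_gram_apply, of_apply, Function.curry_apply]
  rw [integral_finsetSum _ fun i _ => integrable_finsetSum _ fun j _ =>
    integrable_mul_mul_mul_pi_gaussianReal (i, a) (i, b) (j, c) (j, d)]
  simp_rw [integral_finsetSum _ fun j _ => integrable_mul_mul_mul_pi_gaussianReal _ _ _ _]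
  simp only [integral_mul_mul_mul_pi_gaussianReal, Prod.mk.injEq, true_and, ite_and]
  simp only [mul_ite, mul_one, mul_zero, Finset.sum_add_distrib, Finset.sum_ite_irrel,
    Finset.sum_const, Finset.card_univ, Fintype.card_fin, nsmul_eq_mul, Finset.sum_ite_eq,
    Finset.mem_univ, ↓reduceIte]
  split_ifs <;> ring

lemma integral_trace_gram_mul_gram_mul (M N : Matrix (Fin n) (Fin n) ℝ) :
    ∫ Z, (Zᵀ * Z * M * (Zᵀ * Z) * N).trace ∂(stdGaussianMatrix q n) =
      (q : ℝ) ^ 2 * (M * N).trace + q * (Mᵀ * N).trace + q * (M.trace * N.trace) := by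
  have hint (a b c d : Fin n) : Integrable (fun Z : Matrix (Fin q) (Fin n) ℝ =>
      (Zᵀ * Z) a b * (Zᵀ * Z) c d * (M b c * N d a)) (stdGaussianMatrix q n) :=
    (integrable_gram_apply_mul_gram_apply a b c d).mul_const _
  have hsum : ∫ Z, (Zᵀ * Z * M * (Zᵀ * Z) * N).trace ∂(stdGaussianMatrix q n) =
      ∑ a, ∑ b, ∑ c, ∑ d, (∫ Z, (Zᵀ * Z) a b * (Zᵀ * Z) c d ∂(stdGaussianMatrix q n)) *
        (M b c * N d a) := by
    simp_rw [trace_mul_mul_mul_mul_eq_sum, ← integral_mul_const]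
    rw [integral_finsetSum _ fun a _ => integrable_finsetSum _ fun b _ =>
      integrable_finsetSum _ fun c _ => integrable_finsetSum _ fun d _ => hint a b c d]
    refine Finset.sum_congr rfl fun a _ => ?_
    rw [integral_finsetSum _ fun b _ => integrable_finsetSum _ fun c _ =>
      integrable_finsetSum _ fun d _ => hint a b c d]
    refine Finset.sum_congr rfl fun b _ => ?_
    rw [integral_finsetSum _ fun c _ => integrable_finsetSum _ fun d _ => hint a b c d]
    exact Finset.sum_congr rfl fun c _ => integral_finsetSum _ fun d _ => hint a b c d
  rw [hsum]
  simp only [integral_gram_apply_mul_gram_apply]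
  simp only [mul_ite, mul_one, mul_zero, mul_add, add_mul, ite_mul, zero_mul,
    Finset.sum_add_distrib, Finset.sum_ite_eq, Finset.mem_univ, ↓reduceIte, Finset.sum_ite_irrel,
    Finset.sum_const_zero, trace, diag_apply, mul_apply, Finset.mul_sum, transpose_apply,
    Finset.sum_mul]
  ring

lemma trace_gram_mul_gram_of_mul_right {m r : ℕ} (Z : Matrix (Fin q) (Fin n) ℝ)
    (R : Matrix (Fin n) (Fin n) ℝ) (G : Matrix (Fin n) (Fin m) ℝ) (H : Matrix (Fin n) (Fin r) ℝ) :
    (Hᵀ * (Z * R)ᵀ * (Z * R) * G * Gᵀ * (Z * R)ᵀ * (Z * R) * H).trace =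
      (Zᵀ * Z * (R * (G * Gᵀ) * Rᵀ) * (Zᵀ * Z) * (R * (H * Hᵀ) * Rᵀ)).trace := by
  have h : Hᵀ * (Z * R)ᵀ * (Z * R) * G * Gᵀ * (Z * R)ᵀ * (Z * R) * H =
      Hᵀ * (Rᵀ * (Zᵀ * Z * (R * (G * Gᵀ) * Rᵀ) * (Zᵀ * Z) * (R * H))) := by
    simp only [transpose_mul, Matrix.mul_assoc]
  rw [h, trace_mul_comm, Matrix.mul_assoc, trace_mul_comm Rᵀ]
  simp only [Matrix.mul_assoc]

lemma integral_trace_map_mul_stdGaussianMatrix {m r : ℕ} (R : Matrix (Fin n) (Fin n) ℝ)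
    (G : Matrix (Fin n) (Fin m) ℝ) (H : Matrix (Fin n) (Fin r) ℝ) :
    ∫ Y, (Hᵀ * Yᵀ * Y * G * Gᵀ * Yᵀ * Y * H).trace ∂((stdGaussianMatrix q n).map (· * R)) =
      (q : ℝ) * (Rᵀ * R * G * Gᵀ).trace * (Rᵀ * R * H * Hᵀ).trace
        + (q : ℝ) * ((q : ℝ) + 1) * (Rᵀ * R * G * Gᵀ * (Rᵀ * R) * H * Hᵀ).trace := by
  have hcont : Continuous fun Y : Matrix (Fin q) (Fin n) ℝ =>
      (Hᵀ * Yᵀ * Y * G * Gᵀ * Yᵀ * Y * H).trace := by fun_prop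
  have hmul : Continuous fun Z : Matrix (Fin q) (Fin n) ℝ => Z * R := by fun_prop
  rw [integral_map hmul.aemeasurable hcont.aestronglyMeasurable]
  simp_rw [trace_gram_mul_gram_of_mul_right]
  rw [integral_trace_gram_mul_gram_mul]
  have hsymm : (R * (G * Gᵀ) * Rᵀ)ᵀ = R * (G * Gᵀ) * Rᵀ := by
    simp [transpose_mul, Matrix.mul_assoc]
  have hprod : R * (G * Gᵀ) * Rᵀ * (R * (H * Hᵀ) * Rᵀ) =
      R * (G * Gᵀ * (Rᵀ * R) * (H * Hᵀ)) * Rᵀ := by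
    simp only [Matrix.mul_assoc]
  rw [hsymm, hprod]
  simp only [trace_mul_mul_transpose]
  simp only [Matrix.mul_assoc]
  ring

end StdGaussianMatrix

namespace Matrix.PosSemidef

open scoped MatrixOrder

variable {ι : Type*} [Fintype ι] [DecidableEq ι] {S : Matrix ι ι ℝ}

lemma eigenvectorUnitary_mul_diagonal_sqrt_mul_star (hS : S.PosSemidef) :
    (hS.1.eigenvectorUnitary : Matrix ι ι ℝ) * diagonal (Real.sqrt ∘ hS.1.eigenvalues) *
      (star hS.1.eigenvectorUnitary : Matrix ι ι ℝ) = CFC.sqrt S := by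
  rw [CFC.sqrt_eq_cfc, cfc_nnreal_eq_real _ S, hS.1.cfc_eq]
  simp [IsHermitian.cfc, Unitary.conjStarAlgAut_apply, Function.comp_def,
    max_eq_left (hS.eigenvalues_nonneg _)]

lemma transpose_cfcSqrt_mul_cfcSqrt (hS : S.PosSemidef) : (CFC.sqrt S)ᵀ * CFC.sqrt S = S := by
  have hsymm := (CFC.sqrt_nonneg S).posSemidef.1
  rw [IsHermitian, conjTranspose_eq_transpose_of_trivial] at hsymm
  rw [hsymm, CFC.sqrt_mul_sqrt_self S hS.nonneg]

end Matrix.PosSemidef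

theorem stmt16_general {n r q : ℕ}
    (S : Matrix (Fin n) (Fin n) ℝ) (hS : S.PosDef)
    (G : Matrix (Fin n) (Fin n) ℝ) (H : Matrix (Fin n) (Fin r) ℝ) :
    ∫ Y, (Hᵀ * Yᵀ * Y * G * Gᵀ * Yᵀ * Y * H).trace ∂(gaussianRowsMatrix q n S hS)
      = (q : ℝ) * (S * G * Gᵀ).trace * (S * H * Hᵀ).trace
        + (q : ℝ) * ((q : ℝ) + 1) * (S * G * Gᵀ * S * H * Hᵀ).trace := by
  rw [gaussianRowsMatrix, hS.posSemidef.eigenvectorUnitary_mul_diagonal_sqrt_mul_star,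
    integral_trace_map_mul_stdGaussianMatrix, hS.posSemidef.transpose_cfcSqrt_mul_cfcSqrt]

theorem stmt16 {n r q : ℕ} (hn : 0 < n) (hr : 0 < r) (hq : 0 < q)
    (S : Matrix (Fin n) (Fin n) ℝ) (hS : S.PosDef)
    (G : Matrix (Fin n) (Fin n) ℝ) (H : Matrix (Fin n) (Fin r) ℝ) :
    ∫ Y, (Hᵀ * Yᵀ * Y * G * Gᵀ * Yᵀ * Y * H).trace ∂(gaussianRowsMatrix q n S hS)
      = (q : ℝ) * (S * G * Gᵀ).trace * (S * H * Hᵀ).trace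
        + (q : ℝ) * ((q : ℝ) + 1) * (S * G * Gᵀ * S * H * Hᵀ).trace :=
  stmt16_general S hS G H
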